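/- For every p ∈ (0,1), q = 1−p, and every integer k ≥ 1, the 2k-th central moment of the binomial distribution satisfies lim_{n→∞} μ_{2k}(n)/n^k = (2k−1)!! · (pq)^k, where (2k−1)!! = 1·3·5⋯(2k−1). Equivalently, the leading order in n of μ_{2k}(n) is (2k−1)!!(pqn)^k + O(n^{k−1}). -/

import Mathlib

/-!
Adding one Bernoulli trial gives the recurrence
`μ_m(n+1) - μ_m(n) = ∑_{j ≤ m-2} C(m,j) c_{m-j} μ_j(n)`, where `c_j` are the central moments of a
single Bernoulli variable (`c_0 = 1`, `c_1 = 0`, `c_2 = pq`). By strong induction on `m` and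
Stolz–Cesàro, `μ_m(n) / n^⌊m/2⌋` converges. For `m = 2k` only the term `j = 2k - 2` of the increment
is of order `n^(k-1)`, so the limits satisfy `ℓ_{2k} = C(2k,2) pq ℓ_{2k-2} / k = (2k-1) pq ℓ_{2k-2}`.
-/

open Finset Filter Asymptotics Topology
open scoped Nat

section Algebra

variable {R : Type*} [CommRing R]

noncomputable def binomialWeightedSum (p q : R) (n : ℕ) (f : ℕ → R) : R :=
  ∑ i ∈ range (n + 1), n.choose i * p ^ i * q ^ (n - i) * f i

theorem binomialWeightedSum_succ (p q : R) (n : ℕ) (f : ℕ → R) :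
    binomialWeightedSum p q (n + 1) f =
      binomialWeightedSum p q n (fun i => q * f i + p * f (i + 1)) := by
  have hq_part : ∑ i ∈ range (n + 1), (n.choose (i + 1) : R) * p ^ (i + 1) * q ^ (n - i) * f (i + 1) +
      q ^ (n + 1) * f 0 = binomialWeightedSum p q n (fun i => q * f i) := by
    have h := sum_range_succ' (fun i => (n.choose i : R) * p ^ i * q ^ (n + 1 - i) * f i) (n + 1)
    rw [sum_range_succ, Nat.choose_succ_self, Nat.cast_zero, zero_mul, zero_mul, zero_mul,
      add_zero] at h
    simp only [Nat.add_sub_add_right, Nat.choose_zero_right, Nat.cast_one, pow_zero, one_mul,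
      Nat.sub_zero] at h
    rw [← h, binomialWeightedSum]
    refine sum_congr rfl fun i hi => ?_
    rw [Nat.sub_add_comm (mem_range_succ_iff.mp hi), pow_succ]
    ring
  rw [binomialWeightedSum, sum_range_succ']
  simp only [Nat.choose_succ_succ', Nat.cast_add, add_mul, sum_add_distrib, Nat.add_sub_add_right,
    Nat.choose_zero_right, Nat.cast_one, pow_zero, one_mul, Nat.sub_zero,
    binomialWeightedSum] at hq_part ⊢
  simp only [mul_add, sum_add_distrib]
  rw [← hq_part, add_assoc, add_comm]
  exact congrArg _ (sum_congr rfl fun i _ => by ring)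

noncomputable def binomialCentralMoment (p : R) (m n : ℕ) : R :=
  binomialWeightedSum p (1 - p) n fun i => ((i : R) - n * p) ^ m

def bernoulliCentralMoment (p : R) (j : ℕ) : R :=
  (1 - p) * (-p) ^ j + p * (1 - p) ^ j

@[simp]
theorem bernoulliCentralMoment_zero (p : R) : bernoulliCentralMoment p 0 = 1 := by
  simp [bernoulliCentralMoment]

@[simp]
theorem bernoulliCentralMoment_one (p : R) : bernoulliCentralMoment p 1 = 0 := by
  simp [bernoulliCentralMoment]
  ring

theorem bernoulliCentralMoment_two (p : R) : bernoulliCentralMoment p 2 = p * (1 - p) := by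
  simp only [bernoulliCentralMoment]
  ring

/-- A binomial variable with `n + 1` trials is one with `n` trials plus an independent Bernoulli
variable, so its central moments are the binomial convolution of the two sequences of moments. -/
theorem binomialCentralMoment_succ (p : R) (m n : ℕ) :
    binomialCentralMoment p m (n + 1) = ∑ j ∈ range (m + 1),
      m.choose j * bernoulliCentralMoment p (m - j) * binomialCentralMoment p j n := by
  have shift (i : ℕ) : (1 - p) * ((i : R) - (n + 1 : ℕ) * p) ^ m
      + p * (((i + 1 : ℕ) : R) - (n + 1 : ℕ) * p) ^ m
      = ∑ j ∈ range (m + 1), m.choose j * bernoulliCentralMoment p (m - j) * ((i : R) - n * p) ^ j := by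
    rw [show (i : R) - (n + 1 : ℕ) * p = (i - n * p) + -p by push_cast; ring,
      show ((i + 1 : ℕ) : R) - (n + 1 : ℕ) * p = (i - n * p) + (1 - p) by push_cast; ring,
      add_pow, add_pow, mul_sum, mul_sum, ← sum_add_distrib]
    exact sum_congr rfl fun j _ => by rw [bernoulliCentralMoment]; ring
  rw [binomialCentralMoment, binomialWeightedSum_succ]
  simp only [shift, binomialCentralMoment, binomialWeightedSum, mul_sum]
  rw [sum_comm]
  exact sum_congr rfl fun j _ => sum_congr rfl fun i _ => by ring

theorem binomialCentralMoment_zero (p : R) (n : ℕ) : binomialCentralMoment p 0 n = 1 := by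
  induction n with
  | zero => simp [binomialCentralMoment, binomialWeightedSum]
  | succ n ih => simp [binomialCentralMoment_succ, ih]

theorem binomialCentralMoment_one (p : R) (n : ℕ) : binomialCentralMoment p 1 n = 0 := by
  induction n with
  | zero => simp [binomialCentralMoment, binomialWeightedSum]
  | succ n ih => simp [binomialCentralMoment_succ, sum_range_succ, ih]

theorem binomialCentralMoment_add_two_succ (p : R) (m n : ℕ) :
    binomialCentralMoment p (m + 2) (n + 1) = binomialCentralMoment p (m + 2) n +
      ∑ j ∈ range (m + 1), (m + 2).choose j * bernoulliCentralMoment p (m + 2 - j) *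
        binomialCentralMoment p j n := by
  rw [binomialCentralMoment_succ, sum_range_succ, sum_range_succ, Nat.sub_self,
    show m + 2 - (m + 1) = 1 by omega]
  simp only [bernoulliCentralMoment_zero, bernoulliCentralMoment_one, Nat.choose_self]
  push_cast
  ring

end Algebra

theorem tendsto_natCast_pow_div_pow {a b : ℕ} (hab : a ≤ b) :
    Tendsto (fun n : ℕ => (n : ℝ) ^ a / (n : ℝ) ^ b) atTop (𝓝 (if a = b then 1 else 0)) := by
  rcases hab.eq_or_lt with rfl | hlt
  · refine tendsto_const_nhds.congr' ?_
    filter_upwards [eventually_ne_atTop 0] with n hn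
    simp [hn]
  · rw [if_neg hlt.ne]
    exact (tendsto_pow_div_pow_atTop_zero hlt).comp tendsto_natCast_atTop_atTop

theorem tendsto_div_of_tendsto_sub_div_sub {u v : ℕ → ℝ} {L : ℝ} (hv : StrictMono v)
    (hv_top : Tendsto v atTop atTop)
    (h : Tendsto (fun n => (u (n + 1) - u n) / (v (n + 1) - v n)) atTop (𝓝 L)) :
    Tendsto (fun n => u n / v n) atTop (𝓝 L) := by
  have hb (n : ℕ) : 0 < v (n + 1) - v n := sub_pos.2 (hv n.lt_succ_self)
  have hsmall : (fun n => u (n + 1) - u n - L * (v (n + 1) - v n)) =o[atTop]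
      fun n => v (n + 1) - v n := by
    rw [isLittleO_iff_tendsto fun n h => absurd h (hb n).ne']
    simpa using (h.sub_const L).congr fun n => by field_simp [(hb n).ne']
  have hsum : (fun n => u n - u 0 - L * (v n - v 0)) =o[atTop] fun n => v n - v 0 := by
    refine (hsmall.sum_range (fun n => (hb n).le) ?_).congr (fun n => ?_) (fun n => ?_)
    · exact (tendsto_atTop_add_const_right _ (-v 0) hv_top).congr fun n => by
        rw [sum_range_sub, sub_eq_add_neg]
    · rw [sum_sub_distrib, ← mul_sum, sum_range_sub, sum_range_sub]
    · rw [sum_range_sub]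
  have hconst (c : ℝ) : (fun _ : ℕ => c) =o[atTop] v :=
    isLittleO_const_left.2 (Or.inr (tendsto_norm_atTop_atTop.comp hv_top))
  have key : (fun n => u n - L * v n) =o[atTop] v :=
    ((hsum.trans_isBigO ((isBigO_refl v atTop).sub (hconst _).isBigO)).add
      (hconst (u 0 - L * v 0))).congr_left fun n => by ring
  rw [isLittleO_iff_tendsto' ((hv_top.eventually_ne_atTop 0).mono fun n h h' => absurd h' h)] at key
  refine (zero_add L ▸ key.add_const L).congr' ?_
  filter_upwards [hv_top.eventually_ne_atTop 0] with n hn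
  field_simp
  ring

theorem tendsto_succ_pow_sub_pow_div_pow (t : ℕ) :
    Tendsto (fun n : ℕ => (((n : ℝ) + 1) ^ (t + 1) - (n : ℝ) ^ (t + 1)) / (n : ℝ) ^ t) atTop
      (𝓝 (t + 1)) := by
  have expand (n : ℕ) : ((n : ℝ) + 1) ^ (t + 1) - (n : ℝ) ^ (t + 1) =
      ∑ j ∈ range (t + 1), ((t + 1).choose j : ℝ) * (n : ℝ) ^ j := by
    rw [add_pow, sum_range_succ]
    simp only [one_pow, mul_one, Nat.choose_self, Nat.cast_one, add_sub_cancel_right]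
    exact sum_congr rfl fun j _ => mul_comm _ _
  have hlim := tendsto_finsetSum (range (t + 1)) fun j hj =>
    (tendsto_natCast_pow_div_pow (mem_range_succ_iff.mp hj)).const_mul ((t + 1).choose j : ℝ)
  rw [sum_eq_single_of_mem t (self_mem_range_succ t) fun j _ hj => by simp [hj],
    if_pos rfl, mul_one, Nat.choose_succ_self_right] at hlim
  push_cast at hlim
  exact hlim.congr fun n => by rw [expand, sum_div]; simp only [mul_div_assoc]

theorem tendsto_div_pow_succ_of_tendsto_sub_div_pow {u : ℕ → ℝ} {t : ℕ} {A : ℝ}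
    (h : Tendsto (fun n : ℕ => (u (n + 1) - u n) / (n : ℝ) ^ t) atTop (𝓝 A)) :
    Tendsto (fun n : ℕ => u n / (n : ℝ) ^ (t + 1)) atTop (𝓝 (A / (t + 1))) := by
  refine tendsto_div_of_tendsto_sub_div_sub
    (strictMono_nat_of_lt_succ fun n => ?_)
    ((tendsto_pow_atTop t.succ_ne_zero).comp tendsto_natCast_atTop_atTop) ?_
  · exact pow_lt_pow_left₀ (by push_cast; linarith) n.cast_nonneg t.succ_ne_zero
  · refine (h.div (tendsto_succ_pow_sub_pow_div_pow t) (by positivity)).congr' ?_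
    filter_upwards [eventually_ne_atTop 0] with n hn
    push_cast
    exact div_div_div_cancel_right₀ (pow_ne_zero _ (Nat.cast_ne_zero.2 hn)) _ _

theorem tendsto_binomialCentralMoment_succ_sub_div_pow (p : ℝ) (m : ℕ) (L : ℕ → ℝ)
    (hL : ∀ j ≤ m, Tendsto (fun n : ℕ => binomialCentralMoment p j n / (n : ℝ) ^ (j / 2)) atTop
      (𝓝 (L j))) :
    Tendsto (fun n : ℕ => (binomialCentralMoment p (m + 2) (n + 1) -
        binomialCentralMoment p (m + 2) n) / (n : ℝ) ^ (m / 2)) atTop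
      (𝓝 (∑ j ∈ range (m + 1), (m + 2).choose j * bernoulliCentralMoment p (m + 2 - j) * L j *
        if j / 2 = m / 2 then 1 else 0)) := by
  refine (tendsto_finsetSum _ fun j hj => ((hL j (mem_range_succ_iff.mp hj)).const_mul _).mul
    (tendsto_natCast_pow_div_pow (Nat.div_le_div_right (mem_range_succ_iff.mp hj)))).congr' ?_
  filter_upwards [eventually_ne_atTop 0] with n hn
  rw [binomialCentralMoment_add_two_succ, add_sub_cancel_left, sum_div]
  refine sum_congr rfl fun j _ => ?_
  have : (n : ℝ) ^ (j / 2) ≠ 0 := pow_ne_zero _ (Nat.cast_ne_zero.2 hn)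
  field_simp

theorem exists_tendsto_binomialCentralMoment_div_pow (p : ℝ) (m : ℕ) :
    ∃ L, Tendsto (fun n : ℕ => binomialCentralMoment p m n / (n : ℝ) ^ (m / 2)) atTop (𝓝 L) := by
  induction m using Nat.strong_induction_on with
  | _ m ih =>
  match m with
  | 0 => exact ⟨1, by simp [binomialCentralMoment_zero]⟩
  | 1 => exact ⟨0, by simp [binomialCentralMoment_one]⟩
  | m + 2 =>
    choose! L hL using fun j (hj : j ≤ m) => ih j (by omega)
    rw [show (m + 2) / 2 = m / 2 + 1 by omega]
    exact ⟨_, tendsto_div_pow_succ_of_tendsto_sub_div_pow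
      (tendsto_binomialCentralMoment_succ_sub_div_pow p m L hL)⟩

theorem tendsto_binomialCentralMoment_two_mul_div_pow (p : ℝ) (k : ℕ) :
    Tendsto (fun n : ℕ => binomialCentralMoment p (2 * k) n / (n : ℝ) ^ k) atTop
      (𝓝 ((2 * k - 1)‼ * (p * (1 - p)) ^ k)) := by
  induction k with
  | zero => simp [binomialCentralMoment_zero]
  | succ k ih =>
    choose L hL using exists_tendsto_binomialCentralMoment_div_pow p
    have hLk : L (2 * k) = (2 * k - 1)‼ * (p * (1 - p)) ^ k :=
      tendsto_nhds_unique (by simpa using hL (2 * k)) ih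
    have hstep := tendsto_div_pow_succ_of_tendsto_sub_div_pow
      (tendsto_binomialCentralMoment_succ_sub_div_pow p (2 * k) L fun j _ => hL j)
    rw [sum_eq_single_of_mem (2 * k) (self_mem_range_succ _) fun j hj hjk => by
      rw [if_neg (by have := mem_range_succ_iff.mp hj; omega), mul_zero]] at hstep
    simp only [Nat.mul_div_cancel_left k two_pos, if_true, mul_one, hLk] at hstep
    rw [show 2 * (k + 1) = 2 * k + 2 by ring]
    convert hstep using 2
    rw [Nat.add_sub_cancel_left, bernoulliCentralMoment_two, Nat.choose_symm_add,
      Nat.cast_choose_two, Nat.add_succ_sub_one, Nat.doubleFactorial_add_one]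
    push_cast
    field_simp
    ring

theorem binomial_central_moment_leading_order_general
    (p q : ℝ) (hq : q = 1 - p)
    (k : ℕ) :
    Filter.Tendsto
      (fun n : ℕ =>
        (∑ i ∈ Finset.range (n + 1),
            (n.choose i : ℝ) * p ^ i * q ^ (n - i) * ((i : ℝ) - n * p) ^ (2 * k))
          / (n : ℝ) ^ k)
      Filter.atTop
      (nhds ((Nat.doubleFactorial (2 * k - 1) : ℝ) * (p * q) ^ k)) := by
  subst hq
  exact tendsto_binomialCentralMoment_two_mul_div_pow p k

/-- For `p ∈ (0,1)`, `q = 1 - p` and `k ≥ 1`, the `2k`-th central moment of the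
binomial distribution satisfies `lim_{n→∞} μ_{2k}(n)/n^k = (2k-1)!! (pq)^k`. -/
theorem binomial_central_moment_leading_order
    (p q : ℝ) (hp : p ∈ Set.Ioo (0:ℝ) 1) (hq : q = 1 - p)
    (k : ℕ) (hk : 1 ≤ k) :
    Filter.Tendsto
      (fun n : ℕ =>
        (∑ i ∈ Finset.range (n + 1),
            (n.choose i : ℝ) * p ^ i * q ^ (n - i) * ((i : ℝ) - n * p) ^ (2 * k))
          / (n : ℝ) ^ k)
      Filter.atTop
      (nhds ((Nat.doubleFactorial (2 * k - 1) : ℝ) * (p * q) ^ k)) :=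
  binomial_central_moment_leading_order_general p q hq k
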